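/- For any n > 1, if the matrix ring Mₙ(R) is SSP then R is von Neumann regular; conversely if R is von Neumann regular then Mₙ(R) is SSP for every n > 1. -/

import Mathlib

/-!
Right ideals of `S` are `Sᵐᵒᵖ`-submodules of `S`. A summand `I` contains some `t` with `t * x = x`
for all `x ∈ I`, so `xS` is a summand iff `x = x * y * x` for some `y`, and every summand is
principal. In a modular lattice, `A ⊔ C` is complemented when `A` and `C` are and `C` lies in a
complement of `A`; hence if all cyclic submodules of a module are summands, so are all finitely
generated ones, and a von Neumann regular ring is SSP.

If `Mₙ(R)` is SSP, take `e = E₀₀` and `f = E₀₀ + a E₁₀`: then `eS + fS = eS ⊕ (1 - e)fS`, so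
`(1 - e)f = a E₁₀` generates a summand; it is therefore regular, and so is `a`.

If `R` is regular, the right ideal generated by the entries of `v : Rⁿ` is a summand, hence
contains some `v ⬝ᵥ c` acting as the identity on the entries of `v`; then `x ↦ (x ⬝ᵥ c) • v`
projects `Rⁿ` onto `Rv`. So the row space of `A : Mₙ(R)` is a summand of the projective module
`Rⁿ`, `v ↦ v ᵥ* A` splits onto it, and the matrix `B` of the splitting has `A * B * A = A`.
-/

def IsSummand {R M : Type*} [Ring R] [AddCommGroup M] [Module R M]
    (p : Submodule R M) : Prop :=
  ∃ q : Submodule R M, IsCompl p q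

open Submodule MulOpposite

def IsVonNeumannRegular (R : Type*) [Mul R] : Prop :=
  ∀ a : R, ∃ b, a = a * b * a

def IsSSP (S : Type*) [Ring S] : Prop :=
  ∀ p q : Submodule Sᵐᵒᵖ S, IsSummand p → IsSummand q → IsSummand (p ⊔ q)

theorem IsCompl.sup_inf_of_le {α : Type*} [Lattice α] [BoundedOrder α] [IsModularLattice α]
    {a a' c d : α} (ha : IsCompl a a') (hc : IsCompl c d) (hca : c ≤ a') :
    IsCompl (a ⊔ c) (a' ⊓ d) := by
  refine (hc.disjoint.mono_right inf_le_right).isCompl_sup_left_of_isCompl_sup_right ?_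
  rwa [inf_comm, ← sup_inf_assoc_of_le d hca, hc.sup_eq_top, top_inf_eq]

section Module

variable {R M : Type*} [Ring R] [AddCommGroup M] [Module R M]

theorem IsSummand.sup_of_le {A A' C : Submodule R M} (hC : IsSummand C) (hA : IsCompl A A')
    (hCA : C ≤ A') : IsSummand (A ⊔ C) :=
  let ⟨_, hD⟩ := hC
  ⟨_, hA.sup_inf_of_le hD hCA⟩

theorem sup_span_singleton_eq_of_sub_mem {A : Submodule R M} {x y : M} (h : x - y ∈ A) :
    A ⊔ R ∙ x = A ⊔ R ∙ y := by
  have key : ∀ {x y : M}, x - y ∈ A → A ⊔ R ∙ x ≤ A ⊔ R ∙ y := fun {x y} h =>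
    sup_le le_sup_left <| span_singleton_le_iff_mem _ _ |>.mpr <|
      mem_sup.mpr ⟨x - y, h, y, mem_span_singleton_self y, sub_add_cancel x y⟩
  exact le_antisymm (key h) (key (by simpa using neg_mem h))

theorem isSummand_span_singleton_of_smul_eq (φ : M →ₗ[R] R) {v : M} (hv : φ v • v = v) :
    IsSummand (R ∙ v) := by
  let π : M →ₗ[R] R ∙ v := LinearMap.toSpanSingleton R _ ⟨v, mem_span_singleton_self v⟩ ∘ₗ φ
  refine ⟨_, LinearMap.isCompl_of_proj (f := π) ?_⟩
  rintro ⟨_, hx⟩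
  obtain ⟨r, rfl⟩ := mem_span_singleton.mp hx
  ext
  simp [π, hv]

theorem isSummand_of_fg_of_isSummand_span_singleton (h : ∀ v : M, IsSummand (R ∙ v))
    {N : Submodule R M} (hN : N.FG) : IsSummand N := by
  classical
  obtain ⟨s, rfl⟩ := hN
  induction s using Finset.induction_on with
  | empty => exact ⟨⊤, by simpa using isCompl_bot_top⟩
  | insert x s _ ih =>
    obtain ⟨A', hA⟩ := ih
    obtain ⟨a, ha, y, hy, rfl⟩ := mem_sup.mp (hA.sup_eq_top ▸ mem_top : x ∈ span R s ⊔ A')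
    rw [Finset.coe_insert, span_insert, sup_comm,
      sup_span_singleton_eq_of_sub_mem (by simpa using ha : a + y - y ∈ span R s)]
    exact (h y).sup_of_le hA (span_singleton_le_iff_mem _ _ |>.mpr hy)

theorem LinearMap.exists_comp_comp_eq_self_of_isSummand_range [Module.Projective R M]
    (f : M →ₗ[R] M) (hf : IsSummand (range f)) : ∃ g : M →ₗ[R] M, f ∘ₗ g ∘ₗ f = f := by
  obtain ⟨C, hC⟩ := hf
  let π := Submodule.projectionOnto _ _ hC
  have : Module.Projective R (range f) := Module.Projective.of_split (range f).subtype π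
    (LinearMap.ext fun x => projectionOnto_apply_left hC x)
  obtain ⟨s, hs⟩ := Module.projective_lifting_property f.rangeRestrict LinearMap.id
    f.surjective_rangeRestrict
  refine ⟨s ∘ₗ π, LinearMap.ext fun x => ?_⟩
  have := congrArg Subtype.val (LinearMap.congr_fun hs ⟨f x, mem_range_self f x⟩)
  simpa [π, projectionOnto_apply_of_mem_left hC (mem_range_self f x)] using this

end Module

section RightIdeal

variable {S : Type*} [Ring S]

theorem mem_span_singleton_op {x y : S} : y ∈ span Sᵐᵒᵖ {x} ↔ ∃ t, x * t = y := by
  simp [mem_span_singleton, op_surjective.exists]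

theorem IsSummand.exists_mul_eq_self {I : Submodule Sᵐᵒᵖ S} (hI : IsSummand I) :
    ∃ t ∈ I, ∀ x ∈ I, t * x = x := by
  obtain ⟨J, hIJ⟩ := hI
  obtain ⟨t, ht, j, hj, htj⟩ := mem_sup.mp (hIJ.sup_eq_top ▸ mem_top : (1 : S) ∈ I ⊔ J)
  refine ⟨t, ht, fun x hx => ?_⟩
  have hsplit : t * x + j * x = x := by rw [← add_mul, htj, one_mul]
  have hjxI : j * x ∈ I := eq_sub_of_add_eq' hsplit ▸ sub_mem hx (I.smul_mem (op x) ht)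
  have hjx : j * x = 0 := disjoint_def.mp hIJ.disjoint _ hjxI (J.smul_mem (op x) hj)
  simpa [hjx] using hsplit

theorem IsSummand.fg {I : Submodule Sᵐᵒᵖ S} (hI : IsSummand I) : I.FG := by
  obtain ⟨t, ht, htx⟩ := hI.exists_mul_eq_self
  have hIt : I = span Sᵐᵒᵖ {t} :=
    le_antisymm (fun x hx => mem_span_singleton_op.mpr ⟨x, htx x hx⟩)
      ((span_singleton_le_iff_mem _ _).mpr ht)
  exact hIt ▸ fg_span_singleton t

theorem isSummand_span_singleton_iff {x : S} :
    IsSummand (span Sᵐᵒᵖ {x}) ↔ ∃ y, x = x * y * x := by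
  constructor
  · intro h
    obtain ⟨t, ht, htx⟩ := h.exists_mul_eq_self
    obtain ⟨y, rfl⟩ := mem_span_singleton_op.mp ht
    exact ⟨y, (htx x (mem_span_singleton_self x)).symm⟩
  · rintro ⟨y, hy⟩
    let φ : S →ₗ[Sᵐᵒᵖ] Sᵐᵒᵖ :=
      { toFun := fun s => op (y * s)
        map_add' := fun _ _ => by simp [mul_add]
        map_smul' := fun _ _ => by simp [mul_assoc] }
    refine isSummand_span_singleton_of_smul_eq φ ?_
    simp [φ, ← mul_assoc, ← hy]

theorem IsVonNeumannRegular.isSummand_of_fg (h : IsVonNeumannRegular S)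
    {I : Submodule Sᵐᵒᵖ S} (hI : I.FG) : IsSummand I :=
  isSummand_of_fg_of_isSummand_span_singleton
    (fun x => isSummand_span_singleton_iff.mpr (h x)) hI

theorem IsVonNeumannRegular.isSSP (h : IsVonNeumannRegular S) : IsSSP S :=
  fun _ _ hp hq => h.isSummand_of_fg (hp.fg.sup hq.fg)

theorem span_singleton_sup_span_singleton_eq (e f : S) :
    span Sᵐᵒᵖ {e} ⊔ span Sᵐᵒᵖ {f} = span Sᵐᵒᵖ {e} ⊔ span Sᵐᵒᵖ {(1 - e) * f} :=
  sup_span_singleton_eq_of_sub_mem <| mem_span_singleton_op.mpr ⟨f, by noncomm_ring⟩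

theorem disjoint_span_singleton_one_sub_mul {e : S} (he : IsIdempotentElem e) (f : S) :
    Disjoint (span Sᵐᵒᵖ {e}) (span Sᵐᵒᵖ {(1 - e) * f}) := by
  rw [disjoint_def]
  intro z hz hz'
  obtain ⟨s, rfl⟩ := mem_span_singleton_op.mp hz
  obtain ⟨t, ht⟩ := mem_span_singleton_op.mp hz'
  calc e * s = e * (e * s) := by rw [← mul_assoc, he.eq]
    _ = e * (1 - e) * f * t := by rw [← ht]; noncomm_ring
    _ = 0 := by rw [mul_sub, mul_one, he.eq, sub_self, zero_mul, zero_mul]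

theorem IsSSP.vonNeumannRegular_one_sub_mul (h : IsSSP S) {e f : S} (he : IsIdempotentElem e)
    (hf : IsIdempotentElem f) : ∃ y, (1 - e) * f = (1 - e) * f * y * ((1 - e) * f) := by
  have hsum := h _ _ (isSummand_span_singleton_iff.mpr ⟨e, by rw [he.eq, he.eq]⟩)
    (isSummand_span_singleton_iff.mpr ⟨f, by rw [hf.eq, hf.eq]⟩)
  obtain ⟨C, hC⟩ := span_singleton_sup_span_singleton_eq e f ▸ hsum
  exact isSummand_span_singleton_iff.mp ⟨_, (disjoint_span_singleton_one_sub_mul he f).symm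
    |>.isCompl_sup_right_of_isCompl_sup_left (sup_comm (span Sᵐᵒᵖ {e}) _ ▸ hC)⟩

end RightIdeal

section Matrix

open Matrix

variable {R : Type*} [Ring R]

theorem IsVonNeumannRegular.isSummand_span_singleton_pi {ι : Type*} [Fintype ι]
    (h : IsVonNeumannRegular R) (v : ι → R) : IsSummand (R ∙ v) := by
  obtain ⟨t, ht, htv⟩ := (h.isSummand_of_fg (fg_span (Set.finite_range v))).exists_mul_eq_self
  obtain ⟨c, rfl⟩ := (mem_span_range_iff_exists_fun Rᵐᵒᵖ).mp ht
  refine isSummand_span_singleton_of_smul_eq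
    ((dotProductBilin R Rᵐᵒᵖ).flip fun i => (c i).unop) ?_
  ext i
  simpa [dotProduct] using htv (v i) (subset_span ⟨i, rfl⟩)

theorem IsVonNeumannRegular.matrix {n : Type*} [Fintype n] [DecidableEq n]
    (h : IsVonNeumannRegular R) : IsVonNeumannRegular (Matrix n n R) := by
  intro A
  obtain ⟨g, hg⟩ := A.toLinearMapRight'.exists_comp_comp_eq_self_of_isSummand_range
    (isSummand_of_fg_of_isSummand_span_singleton h.isSummand_span_singleton_pi (fg_range _))
  refine ⟨LinearMap.toMatrixRight' g, Matrix.toLinearMapRight'.injective ?_⟩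
  simp [hg]

theorem IsSSP.isVonNeumannRegular_of_matrix {n : Type*} [Fintype n] [DecidableEq n] {i j : n}
    (hij : i ≠ j) (h : IsSSP (Matrix n n R)) : IsVonNeumannRegular R := by
  intro a
  let e : Matrix n n R := single i i 1
  have he : IsIdempotentElem e := by simp [IsIdempotentElem, e]
  have hf : IsIdempotentElem (e + single j i a) := by
    simp [IsIdempotentElem, e, mul_add, add_mul, single_mul_single_of_ne _ _ _ _ hij]
  have hef : (1 - e) * (e + single j i a) = single j i a := by
    simp [e, sub_mul, mul_add, single_mul_single_of_ne _ _ _ _ hij]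
  obtain ⟨y, hy⟩ := h.vonNeumannRegular_one_sub_mul he hf
  rw [hef] at hy
  exact ⟨y i j, by simpa [mul_assoc] using congr_fun₂ hy j i⟩

end Matrix

/-- For any `n > 1`: if `Mₙ(R)` is SSP then `R` is von Neumann regular, and
conversely if `R` is von Neumann regular then `Mₙ(R)` is SSP for every `n > 1`. -/
theorem stmt14 {R : Type*} [Ring R] :
    (∀ n : ℕ, 1 < n →
      (∀ p q : Submodule (Matrix (Fin n) (Fin n) R)ᵐᵒᵖ (Matrix (Fin n) (Fin n) R),
        IsSummand p → IsSummand q → IsSummand (p ⊔ q)) →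
      ∀ a : R, ∃ b : R, a = a * b * a) ∧
    ((∀ a : R, ∃ b : R, a = a * b * a) →
      ∀ n : ℕ, 1 < n →
      ∀ p q : Submodule (Matrix (Fin n) (Fin n) R)ᵐᵒᵖ (Matrix (Fin n) (Fin n) R),
        IsSummand p → IsSummand q → IsSummand (p ⊔ q)) := by
  refine ⟨fun n hn h => ?_, fun h _ _ => (IsVonNeumannRegular.matrix h).isSSP⟩
  exact IsSSP.isVonNeumannRegular_of_matrix (i := ⟨0, by omega⟩) (j := ⟨1, hn⟩)
    (Fin.ne_of_val_ne zero_ne_one) h
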